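/- If a set 𝒯 of binary phylogenetic trees on n taxa is co-displayed in a binary tree-child network, then there exists a taxon x such that at most two distinct cherries containing x occur among the trees of 𝒯. More generally, for every integer k with 1 ≤ k ≤ n−1, the number of taxa that appear in at most k distinct cherries of 𝒯 is at least k−1. -/

import Mathlib

/-- A rooted, leaf-labeled digraph: a candidate phylogenetic network on taxon set `X`. -/
structure Net (V : Type) (X : Type) where
  E : V → V → Prop
  root : V
  leaf : X → V

namespace Net

variable {V X : Type}

/-- Indegree of a vertex. -/
noncomputable def inDeg (N : Net V X) (v : V) : ℕ := {u | N.E u v}.ncard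

/-- Outdegree of a vertex. -/
noncomputable def outDeg (N : Net V X) (v : V) : ℕ := {w | N.E v w}.ncard

def IsLeaf (N : Net V X) (v : V) : Prop := N.outDeg v = 0

/-- A tree node: indegree at most one. -/
def IsTreeNode (N : Net V X) (v : V) : Prop := N.inDeg v ≤ 1

/-- A reticulate node: indegree two (or more, in the non-binary case: indegree ≥ 2). -/
def IsRet (N : Net V X) (v : V) : Prop := 2 ≤ N.inDeg v

def Acyclic (N : Net V X) : Prop := ∀ v, ¬ Relation.TransGen N.E v v

/-- Common well-formedness conditions of a rooted phylogenetic network: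
acyclic, rooted, every node reachable from the root, leaves bijectively labeled by `X`. -/
structure IsPhylo (N : Net V X) : Prop where
  acyclic : N.Acyclic
  rootIn : N.inDeg N.root = 0
  reach : ∀ v, Relation.ReflTransGen N.E N.root v
  leafInj : Function.Injective N.leaf
  leafIsLeaf : ∀ x, N.IsLeaf (N.leaf x)
  leafSurj : ∀ v, N.IsLeaf v → ∃ x, N.leaf x = v
  leafIn : ∀ x, N.inDeg (N.leaf x) = 1

/-- A binary phylogenetic network: every non-leaf node is either a tree node
(indegree ≤ 1, outdegree 2) or a reticulate node (indegree 2, outdegree 1). -/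
structure IsBinaryNet (N : Net V X) extends IsPhylo N : Prop where
  deg : ∀ v, ¬ N.IsLeaf v →
    (N.inDeg v ≤ 1 ∧ N.outDeg v = 2) ∨ (N.inDeg v = 2 ∧ N.outDeg v = 1)

/-- Tree-child property: every non-leaf node has a child that is a tree node. -/
def TreeChild (N : Net V X) : Prop :=
  ∀ v, ¬ N.IsLeaf v → ∃ w, N.E v w ∧ N.IsTreeNode w

/-- A binary phylogenetic tree: a binary phylogenetic network without reticulate nodes. -/
def IsBinaryTree (N : Net V X) : Prop := N.IsBinaryNet ∧ ∀ v, N.inDeg v ≤ 1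

/-- A tree edge: an edge entering a tree node. -/
def TreeEdge (N : Net V X) (u v : V) : Prop := N.E u v ∧ N.IsTreeNode v

/-- The tree component rooted at `x`: all nodes reachable from `x` via tree edges. -/
def comp (N : Net V X) (x : V) : Set V := {v | Relation.ReflTransGen N.TreeEdge x v}

/-- `u` and `v` lie in a common tree component. -/
def InSameComp (N : Net V X) (u v : V) : Prop :=
  ∃ x, (x = N.root ∨ N.IsRet x) ∧ u ∈ N.comp x ∧ v ∈ N.comp x

/-- The taxa `x` and `y` form a cherry: their leaves share a common parent. -/
def HasCherry (N : Net V X) (x y : X) : Prop :=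
  x ≠ y ∧ ∃ p, N.E p (N.leaf x) ∧ N.E p (N.leaf y)

/-- The set of cherries of a tree, as unordered pairs of taxa. -/
def cherries (N : Net V X) : Set (Sym2 X) :=
  {p | ∃ x y, p = s(x, y) ∧ N.HasCherry x y}

/-- The tree has the 3-subtree `((a,b),c)`: a node whose two children are the leaf `c`
and the parent of the cherry `(a,b)`. -/
def Has3Subtree (N : Net V X) (a b c : X) : Prop :=
  a ≠ b ∧ a ≠ c ∧ b ≠ c ∧
  ∃ v p, N.E v p ∧ N.E v (N.leaf c) ∧ N.E p (N.leaf a) ∧ N.E p (N.leaf b)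

def IsAncestor (N : Net V X) (u v : V) : Prop := Relation.ReflTransGen N.E u v

/-- `l` is the least common ancestor of `u` and `v`. -/
def IsLCA (N : Net V X) (l u v : V) : Prop :=
  N.IsAncestor l u ∧ N.IsAncestor l v ∧
  ∀ w, N.IsAncestor w u → N.IsAncestor w v → N.IsAncestor w l

end Net

/-- Paths in `S` from `a` to `b` whose vertices other than `a` and `b` avoid the set `A`. -/
def pathAvoid {V : Type} (S : V → V → Prop) (A : Set V) (a b : V) : Prop :=
  Relation.ReflTransGen (fun u v => S u v ∧ (v = b ∨ v ∉ A)) a b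

/-- `T` is displayed in `N`: `N` contains a subdivision of `T` preserving the leaf labels,
i.e. `T` is obtained from `N` by deleting all but one incoming edge at each reticulate node,
pruning nodes without labeled leaf descendants, and suppressing degree-two nodes. -/
def Display {VT V X : Type} (T : Net VT X) (N : Net V X) : Prop :=
  ∃ (S : V → V → Prop) (φ : VT → V),
    (∀ u v, S u v → N.E u v) ∧
    Function.Injective φ ∧
    (∀ x, φ (T.leaf x) = N.leaf x) ∧
    (∀ a b, T.E a b → pathAvoid S (Set.range φ) (φ a) (φ b)) ∧
    (∀ a : VT, {w | S (φ a) w}.ncard = T.outDeg a ∧ {u | S u (φ a)}.ncard = T.inDeg a) ∧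
    (∀ v : V, v ∉ Set.range φ → ((∃ u, S u v) ∨ (∃ w, S v w)) →
      {w | S v w}.ncard = 1 ∧ {u | S u v}.ncard = 1)

/-- `N` displays the cherry `(x, y)`: some binary tree displayed in `N` has `(x,y)` as a cherry. -/
def DisplaysCherry {V X : Type} (N : Net V X) (x y : X) : Prop :=
  ∃ (VT : Type) (T : Net VT X),
    Finite VT ∧ T.IsBinaryTree ∧ Display T N ∧ T.HasCherry x y

/-- `N` displays the 3-subtree `((a,b),c)`. -/
def Displays3Subtree {V X : Type} (N : Net V X) (a b c : X) : Prop :=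
  ∃ (VT : Type) (T : Net VT X),
    Finite VT ∧ T.IsBinaryTree ∧ Display T N ∧ T.Has3Subtree a b c

/-- Isomorphism of leaf-labeled rooted digraphs. -/
def NetIso {V1 V2 X : Type} (N1 : Net V1 X) (N2 : Net V2 X) : Prop :=
  ∃ f : V1 ≃ V2, (∀ u v, N1.E u v ↔ N2.E (f u) (f v)) ∧
    f N1.root = N2.root ∧ ∀ x, f (N1.leaf x) = N2.leaf x

/-!
A cherry `{x, y}` of a tree displayed in a tree-child network `N` is witnessed by a vertex of `N`
with two distinct children from which *forced* paths lead to `x` and `y`, a step `a → b` being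
forced when `b` is the only tree child of `a`. Indeed, a path of the embedding that leaves a
subdivision vertex through `b` leaves its other tree child `w` unused, and then the tree path from
`w` down to a leaf (which exists by tree-childness) would have to start below the embedded root.

Forced steps are unique in both directions, so the vertices forced-reaching a leaf `x` form a
chain with a top `t x`. If `y` forms a cherry with `x`, then either `t y` has fewer descendants
than `t x`, or `y` is forced-reached from a sibling of `t x`; the latter happens for at most two
taxa, as `t x` has at most two parents, each with at most one other child. Listing the taxa by
the number of descendants of `t x`, the `j`-th one is in at most `(j - 1) + 2` cherries.
-/

open Relation Set

section Counting

lemma exists_finset_card_eq_forall_lt_mem {X α : Type*} [Fintype X] [LinearOrder α] (f : X → α)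
    {j : ℕ} (hj : j ≤ Fintype.card X) :
    ∃ F : Finset X, F.card = j ∧ ∀ x ∈ F, ∀ y, f y < f x → y ∈ F := by
  classical
  induction j with
  | zero => exact ⟨∅, rfl, by simp⟩
  | succ j ih =>
    obtain ⟨F, rfl, hF⟩ := ih (by omega)
    obtain ⟨z, hz, hmin⟩ := Fᶜ.exists_min_image f
      (by rw [← Finset.card_pos, Finset.card_compl]; omega)
    refine ⟨insert z F, Finset.card_insert_of_notMem (Finset.mem_compl.1 hz),
      fun x hx y hy => ?_⟩
    rcases Finset.mem_insert.1 hx with rfl | hx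
    · by_contra hyF
      exact (hmin y (Finset.mem_compl.2 fun h => hyF (Finset.mem_insert_of_mem h))).not_gt hy
    · exact Finset.mem_insert_of_mem (hF x hx y hy)

lemma add_one_le_ncard_setOf_le_add {X α : Type*} [Fintype X] [LinearOrder α] (f : X → α)
    {d : X → ℕ} {c : ℕ} (hd : ∀ x, d x ≤ {y | f y < f x}.ncard + c) {j : ℕ}
    (hj : j + 1 ≤ Fintype.card X) : j + 1 ≤ {x | d x ≤ j + c}.ncard := by
  classical
  obtain ⟨F, hcard, hF⟩ := exists_finset_card_eq_forall_lt_mem f hj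
  have hlower : ∀ x ∈ F, {y | f y < f x}.ncard ≤ j := fun x hx =>
    calc {y | f y < f x}.ncard ≤ ((F.erase x : Finset X) : Set X).ncard :=
          ncard_le_ncard (fun y hy => Finset.mem_erase.2 ⟨ne_of_apply_ne f hy.ne, hF x hx y hy⟩)
      _ = j := by rw [ncard_coe_finset, Finset.card_erase_of_mem hx, hcard, Nat.add_sub_cancel]
  calc j + 1 = (F : Set X).ncard := by rw [ncard_coe_finset, hcard]
    _ ≤ {x | d x ≤ j + c}.ncard :=
      ncard_le_ncard fun x hx => (hd x).trans (Nat.add_le_add_right (hlower x hx) c)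

end Counting

namespace Net

variable {V X : Type} {N : Net V X}

lemma not_isLeaf_of_E [Finite V] {v w : V} (h : N.E v w) : ¬ N.IsLeaf v :=
  ((ncard_pos (toFinite _)).2 ⟨w, h⟩).ne'

lemma eq_of_E_of_isTreeNode [Finite V] {q q' w : V} (hw : N.IsTreeNode w) (hq : N.E q w)
    (hq' : N.E q' w) : q = q' :=
  (ncard_le_one (toFinite _)).1 hw q hq q' hq'

lemma IsBinaryNet.outDeg_le_two (hN : N.IsBinaryNet) (v : V) : N.outDeg v ≤ 2 := by
  by_cases hl : N.IsLeaf v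
  · rw [IsLeaf] at hl
    omega
  · rcases hN.deg v hl with ⟨-, h⟩ | ⟨-, h⟩ <;> omega

lemma IsBinaryNet.inDeg_le_two (hN : N.IsBinaryNet) (v : V) : N.inDeg v ≤ 2 := by
  by_cases hl : N.IsLeaf v
  · obtain ⟨x, rfl⟩ := hN.leafSurj v hl
    rw [hN.leafIn x]
    omega
  · rcases hN.deg v hl with ⟨h, -⟩ | ⟨h, -⟩ <;> omega

lemma IsBinaryNet.eq_or_eq_of_E [Finite V] (hN : N.IsBinaryNet) {v a b c : V} (ha : N.E v a)
    (hb : N.E v b) (hc : N.E v c) (hab : a ≠ b) : c = a ∨ c = b := by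
  by_contra! h
  have h3 : ({a, b, c} : Set V).ncard ≤ N.outDeg v :=
    ncard_le_ncard (by rintro _ (rfl | rfl | rfl) <;> assumption)
  rw [ncard_eq_three.2 ⟨a, b, c, hab, h.1.symm, h.2.symm, rfl⟩] at h3
  have := hN.outDeg_le_two v
  omega

def descendants (N : Net V X) (v : V) : Set V := {w | TransGen N.E v w}

lemma descendants_subset {a b : V} (h : ReflTransGen N.E a b) :
    N.descendants b ⊆ N.descendants a :=
  fun _ hw => TransGen.trans_right h hw

lemma ncard_descendants_lt [Finite V] (hac : N.Acyclic) {a b : V} (h : N.E a b) :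
    (N.descendants b).ncard < (N.descendants a).ncard := by
  refine ncard_lt_ncard ?_
  rw [ssubset_def]
  exact ⟨descendants_subset (.single h), fun hsub => hac b (hsub (.single h))⟩

lemma exists_treePath_to_leaf [Finite V] (hac : N.Acyclic) (htc : N.TreeChild) (v : V) :
    ∃ l, ReflTransGen N.TreeEdge v l ∧ N.IsLeaf l := by
  induction hn : (N.descendants v).ncard using Nat.strong_induction_on generalizing v with
  | _ n ih =>
    by_cases hl : N.IsLeaf v
    · exact ⟨v, .refl, hl⟩
    obtain ⟨w, hvw, hw⟩ := htc v hl
    obtain ⟨l, hwl, hl⟩ := ih _ (hn ▸ ncard_descendants_lt hac hvw) w rfl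
    exact ⟨l, .head ⟨hvw, hw⟩ hwl, hl⟩

/-- In a binary tree-child network, `b` is the only tree child of `a` exactly when `a` is a
reticulation or the sibling of `b` is one. -/
def ForcedStep (N : Net V X) (a b : V) : Prop :=
  N.E a b ∧ ∀ w, N.E a w → N.IsTreeNode w → w = b

def ForcedReach (N : Net V X) : V → V → Prop := ReflTransGen N.ForcedStep

lemma ForcedReach.reflTransGen {a b : V} (h : N.ForcedReach a b) : ReflTransGen N.E a b :=
  ReflTransGen.mono (fun _ _ h => h.1) _ _ h

def IsChainTop (N : Net V X) (x : X) (m : V) : Prop :=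
  ∀ c, N.ForcedReach c (N.leaf x) → N.ForcedReach m c

def HasForcedCherry (N : Net V X) (x y : X) : Prop :=
  ∃ v c₁ c₂, c₁ ≠ c₂ ∧ N.E v c₁ ∧ N.E v c₂ ∧
    N.ForcedReach c₁ (N.leaf x) ∧ N.ForcedReach c₂ (N.leaf y)

def siblingTaxa (N : Net V X) (t : V) : Set X :=
  {y | ∃ v, N.E v t ∧ ∃ c, N.E v c ∧ c ≠ t ∧ N.ForcedReach c (N.leaf y)}

section Forced

variable [Finite V] (htc : N.TreeChild)
include htc

lemma ForcedStep.isTreeNode {a b : V} (h : N.ForcedStep a b) : N.IsTreeNode b := by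
  obtain ⟨w, haw, hw⟩ := htc a (not_isLeaf_of_E h.1)
  exact h.2 w haw hw ▸ hw

lemma forcedStep_rightUnique : Relator.RightUnique N.ForcedStep := fun a _ _ hb hc => by
  obtain ⟨w, haw, hw⟩ := htc a (not_isLeaf_of_E hb.1)
  exact (hb.2 w haw hw).symm.trans (hc.2 w haw hw)

lemma forcedStep_leftUnique : Relator.LeftUnique N.ForcedStep := fun _ _ _ ha hb =>
  eq_of_E_of_isTreeNode (ha.isTreeNode htc) ha.1 hb.1

omit htc in
lemma ForcedReach.eq_of_isLeaf_left {l c : V} (h : N.ForcedReach l c) (hl : N.IsLeaf l) :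
    l = c := by
  rcases ReflTransGen.cases_head h with h | ⟨d, hd, -⟩
  · exact h
  · exact absurd hl (not_isLeaf_of_E hd.1)

lemma ForcedReach.eq_of_isLeaf {a l₁ l₂ : V} (h₁ : N.ForcedReach a l₁)
    (h₂ : N.ForcedReach a l₂) (hl₁ : N.IsLeaf l₁) (hl₂ : N.IsLeaf l₂) :
    l₁ = l₂ := by
  rcases ReflTransGen.total_of_right_unique (forcedStep_rightUnique htc) h₁ h₂ with h | h
  · exact ForcedReach.eq_of_isLeaf_left h hl₁
  · exact (ForcedReach.eq_of_isLeaf_left h hl₂).symm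

lemma exists_isChainTop (hac : N.Acyclic) (x : X) : ∃ m, N.IsChainTop x m := by
  obtain ⟨m, hm, hmax⟩ := exists_max_image {c | N.ForcedReach c (N.leaf x)}
    (fun c => (N.descendants c).ncard) (toFinite _) ⟨N.leaf x, .refl⟩
  refine ⟨m, fun c hc => ?_⟩
  rcases ReflTransGen.total_of_right_unique (r := Function.swap N.ForcedStep)
    (fun _ _ _ h₁ h₂ => forcedStep_leftUnique htc h₁ h₂) (reflTransGen_swap.2 hm)
    (reflTransGen_swap.2 hc) with h | h
  · rcases ReflTransGen.cases_head (reflTransGen_swap.1 h) with rfl | ⟨d, hcd, hdm⟩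
    · exact .refl
    · have := ncard_le_ncard (descendants_subset (ForcedReach.reflTransGen hdm))
      have := ncard_descendants_lt hac hcd.1
      have := hmax c hc
      omega
  · exact reflTransGen_swap.1 h

lemma HasForcedCherry.ncard_descendants_lt_or_mem_siblingTaxa (hac : N.Acyclic) {x y : X}
    {tx ty : V} (h : N.HasForcedCherry x y) (htx : N.IsChainTop x tx) (hty : N.IsChainTop y ty) :
    (N.descendants ty).ncard < (N.descendants tx).ncard ∨ y ∈ N.siblingTaxa tx := by
  obtain ⟨v, c₁, c₂, hne, hv₁, hv₂, h₁, h₂⟩ := h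
  rcases ReflTransGen.cases_tail (htx c₁ h₁) with rfl | ⟨w, htw, hwc⟩
  · exact .inr ⟨v, hv₁, c₂, hv₂, hne.symm, h₂⟩
  left
  obtain rfl : w = v := eq_of_E_of_isTreeNode (hwc.isTreeNode htc) hwc.1 hv₁
  have hc₂ : ¬ N.IsTreeNode c₂ := fun h => hne (hwc.2 c₂ hv₂ h).symm
  obtain rfl : ty = c₂ := by
    rcases ReflTransGen.cases_tail (hty c₂ h₂) with h | ⟨u, -, hu⟩
    · exact h.symm
    · exact absurd (hu.isTreeNode htc) hc₂
  calc (N.descendants ty).ncard < (N.descendants w).ncard := ncard_descendants_lt hac hv₂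
    _ ≤ (N.descendants tx).ncard :=
      ncard_le_ncard (descendants_subset (ForcedReach.reflTransGen htw))

lemma ncard_siblingTaxa_le_two (hN : N.IsBinaryNet) (t : V) : (N.siblingTaxa t).ncard ≤ 2 := by
  have : Nonempty V := ⟨N.root⟩
  choose! parent hparent using fun y (hy : y ∈ N.siblingTaxa t) => hy
  refine (ncard_le_ncard_of_injOn parent (fun y hy => (hparent y hy).1) ?_).trans
    (hN.inDeg_le_two t)
  intro y₁ hy₁ y₂ hy₂ heq
  obtain ⟨-, c₁, hc₁, hc₁t, h₁⟩ := hparent y₁ hy₁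
  obtain ⟨hv, c₂, hc₂, hc₂t, h₂⟩ := hparent y₂ hy₂
  rw [heq] at hc₁
  obtain rfl : c₂ = c₁ := (hN.eq_or_eq_of_E hv hc₁ hc₂ hc₁t.symm).resolve_left hc₂t
  exact hN.leafInj (h₁.eq_of_isLeaf htc h₂ (hN.leafIsLeaf y₁) (hN.leafIsLeaf y₂))

end Forced

lemma HasCherry.symm {x y : X} (h : N.HasCherry x y) : N.HasCherry y x :=
  let ⟨hne, p, hx, hy⟩ := h
  ⟨hne.symm, p, hy, hx⟩

lemma exists_hasCherry_of_mem_cherries {p : Sym2 X} {x : X} (hp : p ∈ N.cherries) (hx : x ∈ p) :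
    ∃ y, p = s(x, y) ∧ N.HasCherry x y := by
  obtain ⟨a, b, rfl, hab⟩ := hp
  rcases Sym2.mem_iff.1 hx with rfl | rfl
  · exact ⟨b, rfl, hab⟩
  · exact ⟨a, Sym2.eq_swap, hab.symm⟩

end Net

structure IsDisplayEmbedding {VT V X : Type} (T : Net VT X) (N : Net V X) (S : V → V → Prop)
    (φ : VT → V) : Prop where
  le : ∀ u v, S u v → N.E u v
  injective : Function.Injective φ
  map_leaf : ∀ x, φ (T.leaf x) = N.leaf x
  path : ∀ a b, T.E a b → pathAvoid S (Set.range φ) (φ a) (φ b)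
  deg : ∀ a : VT, {w | S (φ a) w}.ncard = T.outDeg a ∧ {u | S u (φ a)}.ncard = T.inDeg a
  subdiv : ∀ v : V, v ∉ Set.range φ → ((∃ u, S u v) ∨ (∃ w, S v w)) →
    {w | S v w}.ncard = 1 ∧ {u | S u v}.ncard = 1

lemma Display.exists_isDisplayEmbedding {VT V X : Type} {T : Net VT X} {N : Net V X}
    (h : Display T N) : ∃ S φ, IsDisplayEmbedding T N S φ :=
  let ⟨S, φ, h₁, h₂, h₃, h₄, h₅, h₆⟩ := h
  ⟨S, φ, h₁, h₂, h₃, h₄, h₅, h₆⟩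

namespace IsDisplayEmbedding

variable {VT V X : Type} {T : Net VT X} {N : Net V X} {S : V → V → Prop} {φ : VT → V}
  (he : IsDisplayEmbedding T N S φ)
include he

lemma reflTransGen_map {a b : VT} (h : ReflTransGen T.E a b) :
    ReflTransGen N.E (φ a) (φ b) := by
  induction h with
  | refl => exact .refl
  | tail _ hbc ih =>
    exact ih.trans (ReflTransGen.mono (fun _ _ h => he.le _ _ h.1) _ _ (he.path _ _ hbc))

variable [Finite V] (hN : N.IsPhylo) (hT : T.IsBinaryTree)
include hN hT

lemma ncard_setOf_S_eq_one {w : V} (hw : N.IsLeaf w ∨ ∃ w', S w w') (hroot : w ≠ φ T.root) :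
    {u | S u w}.ncard = 1 := by
  rcases hw with hl | ⟨w', hww'⟩
  · obtain ⟨x, rfl⟩ := hN.leafSurj w hl
    rw [← he.map_leaf, (he.deg _).2, hT.1.leafIn]
  by_cases hφ : w ∈ range φ
  · obtain ⟨a, rfl⟩ := hφ
    obtain ⟨b, hba⟩ : ∃ b, T.E b a := by
      rcases ReflTransGen.cases_tail (hT.1.reach a) with h | ⟨b, -, hba⟩
      · exact absurd (h ▸ rfl) hroot
      · exact ⟨b, hba⟩
    have hne : φ b ≠ φ a := fun h => by
      obtain rfl := he.injective h
      exact hT.1.acyclic b (.single hba)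
    obtain ⟨u, hu⟩ : ∃ u, S u (φ a) := by
      rcases ReflTransGen.cases_tail (he.path b a hba) with h | ⟨u, -, hu⟩
      · exact absurd h.symm hne
      · exact ⟨u, hu.1⟩
    have hle := (he.deg a).2 ▸ hT.2 a
    have hpos : 0 < {u | S u (φ a)}.ncard := (ncard_pos (toFinite _)).2 ⟨u, hu⟩
    omega
  · exact (he.subdiv w hφ (.inr ⟨w', hww'⟩)).2

/-- The unique used edge into a used tree node `w` is its only incoming edge. -/
lemma eq_root_of_not_S {q w : V} (hw : N.IsTreeNode w) (hqw : N.E q w) (hS : ¬ S q w)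
    (hused : N.IsLeaf w ∨ ∃ w', S w w') : w = φ T.root := by
  by_contra hroot
  obtain ⟨u, hu⟩ := ncard_eq_one.1 (he.ncard_setOf_S_eq_one hN hT hused hroot)
  have hSu : S u w := (hu ▸ mem_singleton u : u ∈ {u | S u w})
  exact hS (Net.eq_of_E_of_isTreeNode hw hqw (he.le _ _ hSu) ▸ hSu)

/-- Along a tree path from `w` to a leaf, the first vertex used by the embedding is the image of
the root of `T`. -/
lemma transGen_root_of_not_S {w l : V} (hwl : ReflTransGen N.TreeEdge w l) (hl : N.IsLeaf l) :
    ∀ {q}, N.IsTreeNode w → N.E q w → ¬ S q w → TransGen N.E q (φ T.root) := by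
  induction hwl using ReflTransGen.head_induction_on with
  | refl =>
    intro q hw hqw hS
    exact he.eq_root_of_not_S hN hT hw hqw hS (.inl hl) ▸ .single hqw
  | @head w w' hww' _ ih =>
    intro q hw hqw hS
    by_cases hS' : S w w'
    · exact he.eq_root_of_not_S hN hT hw hqw hS (.inr ⟨w', hS'⟩) ▸ .single hqw
    · exact .head hqw (ih hww'.2 hww'.1 hS')

lemma forcedStep_of_S (htc : N.TreeChild) {c d : V} (hc : ReflTransGen N.E (φ T.root) c)
    (hcφ : c ∉ range φ) (hcd : S c d) : N.ForcedStep c d := by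
  refine ⟨he.le _ _ hcd, fun w hcw hw => by_contra fun hwd => ?_⟩
  have hS : ¬ S c w := fun hcw' => hwd <|
    (ncard_le_one (toFinite _)).1 (he.subdiv c hcφ (.inr ⟨d, hcd⟩)).1.le _ hcw' _ hcd
  obtain ⟨l, hwl, hl⟩ := Net.exists_treePath_to_leaf hN.acyclic htc w
  exact hN.acyclic c ((he.transGen_root_of_not_S hN hT hwl hl hw hcw hS).trans_left hc)

lemma forcedReach_of_pathAvoid (htc : N.TreeChild) {c : V} {x : X}
    (hc : ReflTransGen N.E (φ T.root) c) (hcφ : c = N.leaf x ∨ c ∉ range φ)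
    (hpath : pathAvoid S (range φ) c (N.leaf x)) : N.ForcedReach c (N.leaf x) := by
  induction hpath using ReflTransGen.head_induction_on with
  | refl => exact .refl
  | @head c d hcd _ ih =>
    have hcd' := he.le _ _ hcd.1
    have hcφ' : c ∉ range φ :=
      hcφ.resolve_left fun h => Net.not_isLeaf_of_E hcd' (h ▸ hN.leafIsLeaf x)
    exact .head (he.forcedStep_of_S hN hT htc hc hcφ' hcd.1) (ih (hc.tail hcd') hcd.2)

lemma hasForcedCherry (htc : N.TreeChild) {x y : X} (h : T.HasCherry x y) :
    N.HasForcedCherry x y := by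
  obtain ⟨hxy, p, hpx, hpy⟩ := h
  have hp := he.reflTransGen_map (hT.1.reach p)
  have hchild : ∀ z, T.E p (T.leaf z) → ∃ c, N.E (φ p) c ∧ N.ForcedReach c (N.leaf z) := by
    intro z hpz
    have hpath := he.path _ _ hpz
    rw [he.map_leaf] at hpath
    rcases ReflTransGen.cases_head hpath with h | ⟨c, hpc, hc⟩
    · rw [← he.map_leaf] at h
      exact absurd (.single (he.injective h ▸ hpz)) (hT.1.acyclic _)
    · exact ⟨c, he.le _ _ hpc.1,
        he.forcedReach_of_pathAvoid hN hT htc (hp.tail (he.le _ _ hpc.1)) hpc.2 hc⟩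
  obtain ⟨c₁, h₁, hc₁⟩ := hchild x hpx
  obtain ⟨c₂, h₂, hc₂⟩ := hchild y hpy
  refine ⟨φ p, c₁, c₂, ?_, h₁, h₂, hc₁, hc₂⟩
  rintro rfl
  exact hxy (hN.leafInj (hc₁.eq_of_isLeaf htc hc₂ (hN.leafIsLeaf x) (hN.leafIsLeaf y)))

end IsDisplayEmbedding

theorem stmt_13_general {V X : Type} [Fintype V] [Fintype X] (N : Net V X)
    (hN : N.IsBinaryNet) (htc : N.TreeChild)
    (ι : Type) (VT : ι → Type) (Ts : ∀ i, Net (VT i) X)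
    (htree : ∀ i, (Ts i).IsBinaryTree)
    (hdisp : ∀ i, Display (Ts i) N) :
    (∃ x : X, {p : Sym2 X | (∃ i, p ∈ Net.cherries (Ts i)) ∧ x ∈ p}.ncard ≤ 2) ∧
    ∀ k : ℕ, 1 ≤ k → k ≤ Fintype.card X - 1 →
      k - 1 ≤ {x : X |
        {p : Sym2 X | (∃ i, p ∈ Net.cherries (Ts i)) ∧ x ∈ p}.ncard ≤ k}.ncard := by
  choose top htop using N.exists_isChainTop htc hN.acyclic
  let μ : X → ℕ := fun x => (N.descendants (top x)).ncard
  have hdeg : ∀ x, {p : Sym2 X | (∃ i, p ∈ Net.cherries (Ts i)) ∧ x ∈ p}.ncard ≤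
      {y | μ y < μ x}.ncard + 2 := by
    intro x
    have hsub : {p : Sym2 X | (∃ i, p ∈ Net.cherries (Ts i)) ∧ x ∈ p} ⊆
        (fun y => s(x, y)) '' ({y | μ y < μ x} ∪ N.siblingTaxa (top x)) := by
      rintro p ⟨⟨i, hp⟩, hxp⟩
      obtain ⟨y, rfl, hxy⟩ := Net.exists_hasCherry_of_mem_cherries hp hxp
      obtain ⟨S, φ, he⟩ := (hdisp i).exists_isDisplayEmbedding
      have hC := he.hasForcedCherry hN.toIsPhylo (htree i) htc hxy
      refine ⟨y, ?_, rfl⟩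
      exact hC.ncard_descendants_lt_or_mem_siblingTaxa htc hN.acyclic (htop x) (htop y)
    calc _ ≤ _ := ncard_le_ncard hsub
      _ ≤ _ := ncard_image_le (toFinite _)
      _ ≤ _ := ncard_union_le _ _
      _ ≤ _ := Nat.add_le_add_left (Net.ncard_siblingTaxa_le_two htc hN _) _
  obtain ⟨l, -, hl⟩ := N.exists_treePath_to_leaf hN.acyclic htc N.root
  have hX : 1 ≤ Fintype.card X := Fintype.card_pos_iff.2 ⟨(hN.leafSurj l hl).choose⟩
  refine ⟨?_, fun k hk1 hk2 => ?_⟩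
  · have := add_one_le_ncard_setOf_le_add μ hdeg (j := 0) hX
    exact nonempty_of_ncard_ne_zero (Nat.pos_iff_ne_zero.1 this)
  · match k, hk1 with
    | 1, _ => exact Nat.zero_le _
    | j + 2, _ =>
      have := add_one_le_ncard_setOf_le_add μ hdeg (j := j) (by omega)
      omega

/-- If a set of binary trees on `n` taxa is co-displayed in a binary tree-child network, then
some taxon appears in at most two distinct cherries of the trees; more generally, for every
`1 ≤ k ≤ n - 1`, at least `k - 1` taxa appear in at most `k` distinct cherries. -/
theorem stmt_13 {V X : Type} [Fintype V] [Fintype X] (N : Net V X)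
    (hN : N.IsBinaryNet) (htc : N.TreeChild)
    (ι : Type) (VT : ι → Type) (Ts : ∀ i, Net (VT i) X)
    (hfin : ∀ i, Finite (VT i)) (htree : ∀ i, (Ts i).IsBinaryTree)
    (hdisp : ∀ i, Display (Ts i) N) :
    (∃ x : X, {p : Sym2 X | (∃ i, p ∈ Net.cherries (Ts i)) ∧ x ∈ p}.ncard ≤ 2) ∧
    ∀ k : ℕ, 1 ≤ k → k ≤ Fintype.card X - 1 →
      k - 1 ≤ {x : X |
        {p : Sym2 X | (∃ i, p ∈ Net.cherries (Ts i)) ∧ x ∈ p}.ncard ≤ k}.ncard :=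
  stmt_13_general N hN htc ι VT Ts htree hdisp
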